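/- arXiv:2602.16568 — 2 statements merged into one kernel-verified Lean document; each statement's English description precedes it below -/
import Mathlib

section
/- Welch bound: Let v_1, …, v_d be unit vectors in ℝ^n. Then (1/d²) · Σ_{(i,j) ∈ [d]×[d]} ⟨v_i, v_j⟩² ≥ 1/n. -/
open scoped BigOperators RealInnerProductSpace

/-!
With `A` the matrix of coordinates of the `v i` in an orthonormal basis, the Gram matrix
`(⟪v i, v j⟫) = Aᵀ A` and the frame operator `A Aᵀ` (an `n × n` matrix) have the same sum of
squared entries, namely `trace (Aᵀ A Aᵀ A)`, and the same trace `∑ ‖v i‖² = d`. Cauchy–Schwarz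
on the diagonal of the frame operator gives `d² ≤ n · ∑ (A Aᵀ)ₖₗ²`.
-/

namespace Matrix

variable {m n R : Type*} [Fintype m] [Fintype n]

theorem sq_trace_le_card_mul_sum_sq [CommRing R] [LinearOrder R] [IsStrictOrderedRing R]
    (A : Matrix n n R) :
    A.trace ^ 2 ≤ Fintype.card n * ∑ i, ∑ j, A i j ^ 2 := calc
  A.trace ^ 2 ≤ Fintype.card n * ∑ i, A i i ^ 2 := sq_sum_le_card_mul_sum_sq ..
  _ ≤ Fintype.card n * ∑ i, ∑ j, A i j ^ 2 := by
    gcongr with i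
    exact Finset.single_le_sum (f := fun j ↦ A i j ^ 2) (fun _ _ ↦ sq_nonneg _)
      (Finset.mem_univ i)

theorem trace_mul_transpose_self [CommSemiring R] (A : Matrix m n R) :
    (A * Aᵀ).trace = ∑ i, ∑ j, A i j ^ 2 := by
  simp [trace, mul_apply, sq]

theorem sum_sq_transpose_mul_self_eq_sum_sq_mul_transpose_self [CommSemiring R]
    (A : Matrix m n R) :
    ∑ i, ∑ j, (Aᵀ * A) i j ^ 2 = ∑ i, ∑ j, (A * Aᵀ) i j ^ 2 := by
  simp only [← trace_mul_transpose_self, transpose_mul, transpose_transpose, Matrix.mul_assoc]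
  rw [trace_mul_comm Aᵀ, Matrix.mul_assoc, Matrix.mul_assoc]

theorem sq_trace_transpose_mul_self_le [CommRing R] [LinearOrder R] [IsStrictOrderedRing R]
    (A : Matrix m n R) :
    (Aᵀ * A).trace ^ 2 ≤ Fintype.card m * ∑ i, ∑ j, (Aᵀ * A) i j ^ 2 := by
  rw [trace_mul_comm, sum_sq_transpose_mul_self_eq_sum_sq_mul_transpose_self]
  exact sq_trace_le_card_mul_sum_sq _

end Matrix

theorem sq_card_le_finrank_mul_sum_sq_inner {ι E : Type*} [Fintype ι]
    [NormedAddCommGroup E] [InnerProductSpace ℝ E] [FiniteDimensional ℝ E]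
    (v : ι → E) (hv : ∀ i, ‖v i‖ = 1) :
    (Fintype.card ι : ℝ) ^ 2 ≤ Module.finrank ℝ E * ∑ i, ∑ j, ⟪v i, v j⟫ ^ 2 := by
  have hgram := Matrix.gram_eq_conjTranspose_mul (stdOrthonormalBasis ℝ E) v
  rw [Matrix.conjTranspose_eq_transpose_of_trivial] at hgram
  have htrace : (Matrix.gram ℝ v).trace = Fintype.card ι := by
    simp [Matrix.trace, Matrix.gram_apply, hv]
  have hcs := Matrix.sq_trace_transpose_mul_self_le
    (Matrix.of fun i j ↦ (stdOrthonormalBasis ℝ E).repr (v j) i)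
  rw [← hgram, htrace, Fintype.card_fin] at hcs
  simpa [Matrix.gram_apply] using hcs

/-- Welch bound: for unit vectors `v_1, …, v_d` in `ℝ^n`, the average squared inner
product `(1/d²) Σ_{i,j} ⟨v_i, v_j⟩²` is at least `1/n`. -/
theorem welch_bound {n d : ℕ} (hd : 0 < d) (v : Fin d → EuclideanSpace ℝ (Fin n))
    (hv : ∀ i, ‖v i‖ = 1) :
    (1 : ℝ) / n ≤ (1 / (d : ℝ) ^ 2) * ∑ i, ∑ j, ⟪v i, v j⟫ ^ 2 := by
  have h := sq_card_le_finrank_mul_sum_sq_inner v hv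
  rw [Fintype.card_fin, finrank_euclideanSpace_fin] at h
  rcases n.eq_zero_or_pos with rfl | hn
  · rw [Nat.cast_zero, div_zero]
    positivity
  rw [div_le_iff₀ (by positivity), one_div_mul_eq_div, mul_comm, ← mul_div_assoc,
    le_div_iff₀ (by positivity), one_mul]
  exact h
end

section
/- Let ε ∈ (0, 1/2), s ≥ 2, and d ≥ s³/ε². If X ∈ ℝ^{n×d} satisfies (ε, s)-ℓ∞-RIP, then n ≥ s²/(144 ε²). -/
open scoped BigOperators
open Finset

lemma sum4_swap {n d : ℕ} (f : Fin d → Fin d → Fin n → Fin n → ℝ) :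
    ∑ i, ∑ j, ∑ a, ∑ b, f i j a b = ∑ a, ∑ b, ∑ i, ∑ j, f i j a b := by
  calc ∑ i, ∑ j, ∑ a, ∑ b, f i j a b
      = ∑ i, ∑ a, ∑ j, ∑ b, f i j a b :=
        Finset.sum_congr rfl fun i _ => Finset.sum_comm
    _ = ∑ i, ∑ a, ∑ b, ∑ j, f i j a b :=
        Finset.sum_congr rfl fun i _ => Finset.sum_congr rfl fun a _ => Finset.sum_comm
    _ = ∑ a, ∑ i, ∑ b, ∑ j, f i j a b := Finset.sum_comm
    _ = ∑ a, ∑ b, ∑ i, ∑ j, f i j a b :=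
        Finset.sum_congr rfl fun a _ => Finset.sum_comm

/-- Welch-type inequality: `(tr XᵀX)² ≤ n ⬝ ‖XᵀX‖_F²`. -/
lemma welch_aux {n d : ℕ} (X : Matrix (Fin n) (Fin d) ℝ) :
    (∑ i, ∑ a, X a i * X a i) ^ 2 ≤
      n * ∑ i, ∑ j, (∑ a, X a i * X a j) ^ 2 := by
  set M : Fin n → Fin n → ℝ := fun a b => ∑ i, X a i * X b i with hM
  have htr : ∑ i, ∑ a, X a i * X a i = ∑ a, M a a := Finset.sum_comm
  have hfrob : ∑ i, ∑ j, (∑ a, X a i * X a j) ^ 2 = ∑ a, ∑ b, M a b ^ 2 := by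
    have l1 : ∑ i, ∑ j, (∑ a, X a i * X a j) ^ 2
        = ∑ i, ∑ j, ∑ a, ∑ b, (X a i * X a j) * (X b i * X b j) := by
      refine Finset.sum_congr rfl fun i _ => Finset.sum_congr rfl fun j _ => ?_
      rw [sq, Finset.sum_mul_sum]
    have l2 : ∑ a, ∑ b, M a b ^ 2
        = ∑ a, ∑ b, ∑ i, ∑ j, (X a i * X b i) * (X a j * X b j) := by
      refine Finset.sum_congr rfl fun a _ => Finset.sum_congr rfl fun b _ => ?_
      rw [sq, hM, Finset.sum_mul_sum]
    rw [l1, l2, sum4_swap]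
    refine Finset.sum_congr rfl fun a _ => Finset.sum_congr rfl fun b _ =>
      Finset.sum_congr rfl fun i _ => Finset.sum_congr rfl fun j _ => by ring
  rw [htr, hfrob]
  calc (∑ a, M a a) ^ 2 ≤ (#(Finset.univ : Finset (Fin n)) : ℝ) * ∑ a, M a a ^ 2 :=
        sq_sum_le_card_mul_sum_sq
    _ ≤ n * ∑ a, ∑ b, M a b ^ 2 := by
        rw [Finset.card_univ, Fintype.card_fin]
        refine mul_le_mul_of_nonneg_left (Finset.sum_le_sum fun a _ => ?_) (by positivity)
        exact Finset.single_le_sum (fun b _ => sq_nonneg (M a b)) (Finset.mem_univ a)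

/-- `X` is `(ε, s)`-`ℓ∞`-RIP: for every `S ⊆ [d]` with `|S| ≤ s`, the `ℓ∞ → ℓ∞` operator
norm of `[XᵀX − I]_{S×S}` (the largest `ℓ1` norm of a row of the submatrix) is at most `ε`. -/
def linfRIP {n d : ℕ} (ε : ℝ) (s : ℕ) (X : Matrix (Fin n) (Fin d) ℝ) : Prop :=
  ∀ S : Finset (Fin d), S.card ≤ s → ∀ i ∈ S,
    ∑ j ∈ S, |(X.transpose * X - 1 : Matrix (Fin d) (Fin d) ℝ) i j| ≤ ε

set_option maxHeartbeats 2000000 in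
/-- Measurement lower bound for `ℓ∞`-RIP: if `ε ∈ (0, 1/2)`, `s ≥ 2`, `d ≥ s³/ε²`, and
`X ∈ ℝ^{n×d}` is `(ε, s)`-`ℓ∞`-RIP, then `n ≥ s²/(144 ε²)`. -/
theorem linfRIP_forces_n_ge {n d : ℕ} (ε : ℝ) (hε : 0 < ε) (hε' : ε < 1 / 2)
    (s : ℕ) (hs : 2 ≤ s) (hd : (s : ℝ) ^ 3 / ε ^ 2 ≤ d)
    (X : Matrix (Fin n) (Fin d) ℝ) (hX : linfRIP ε s X) :
    (s : ℝ) ^ 2 / (144 * ε ^ 2) ≤ n := by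
  classical
  set G : Fin d → Fin d → ℝ := fun i j => ∑ a, X a i * X a j with hG
  have hS2 : (2:ℝ) ≤ (s:ℝ) := by exact_mod_cast hs
  have hS0 : (0:ℝ) < (s:ℝ) := by linarith
  have hD : (0:ℝ) < (d:ℝ) :=
    lt_of_lt_of_le (div_pos (pow_pos hS0 3) (pow_pos hε 2)) hd
  have hentry : ∀ i j : Fin d,
      (X.transpose * X - 1 : Matrix (Fin d) (Fin d) ℝ) i j
        = G i j - if i = j then 1 else 0 := by
    intro i j
    simp [Matrix.sub_apply, Matrix.mul_apply, Matrix.transpose_apply, Matrix.one_apply, hG]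
  -- diagonal bound
  have hdiag : ∀ i : Fin d, |G i i - 1| ≤ ε := by
    intro i
    have h := hX {i} (by simpa using Nat.one_le_of_lt hs) i (Finset.mem_singleton_self i)
    simpa [hentry] using h
  -- row sums over sets of size ≤ s-1 avoiding i
  have hrow : ∀ (i : Fin d) (T : Finset (Fin d)), i ∉ T → T.card ≤ s - 1 →
      ∑ j ∈ T, |G i j| ≤ ε := by
    intro i T hiT hT
    have hcard : (insert i T).card ≤ s := by
      rw [Finset.card_insert_of_notMem hiT]; omega
    have h := hX (insert i T) hcard i (Finset.mem_insert_self i T)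
    rw [Finset.sum_insert hiT] at h
    have h2 : ∑ j ∈ T, |(X.transpose * X - 1 : Matrix (Fin d) (Fin d) ℝ) i j|
        = ∑ j ∈ T, |G i j| := by
      refine Finset.sum_congr rfl fun j hj => ?_
      have hij : i ≠ j := fun e => hiT (e ▸ hj)
      simp [hentry, hij]
    have h3 : 0 ≤ |(X.transpose * X - 1 : Matrix (Fin d) (Fin d) ℝ) i i| := abs_nonneg _
    rw [h2] at h
    linarith
  -- pairwise bound
  have hpair : ∀ i j : Fin d, i ≠ j → |G i j| ≤ ε := by
    intro i j hij
    have h := hrow i {j} (by simpa using hij) (by simp; omega)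
    simpa using h
  set t : ℝ := ε / ((s:ℝ) - 1) with ht
  have ht0 : 0 < t := div_pos hε (by linarith)
  have htmul : ((s:ℝ) - 1) * t = ε := by
    rw [ht, mul_comm, div_mul_cancel₀ ε (ne_of_gt (by linarith : (0:ℝ) < (s:ℝ) - 1))]
  -- per-row square bound
  have hsq : ∀ i : Fin d, ∑ j ∈ Finset.univ.erase i, (G i j)^2 ≤ ε^2 + d * t^2 := by
    intro i
    set B := (Finset.univ.erase i).filter (fun j => t < |G i j|) with hB
    have hBi : i ∉ B := fun h => (Finset.mem_erase.1 (Finset.mem_filter.1 h).1).1 rfl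
    have hBcard : B.card ≤ s - 1 := by
      by_contra hc
      push_neg at hc
      obtain ⟨T, hTB, hTcard⟩ := Finset.exists_subset_card_eq (le_of_lt hc)
      have hiT : i ∉ T := fun h => hBi (hTB h)
      have h1 := hrow i T hiT (le_of_eq hTcard)
      have hne : T.Nonempty := Finset.card_pos.1 (by omega)
      have h2 : ∑ j ∈ T, t < ∑ j ∈ T, |G i j| :=
        Finset.sum_lt_sum_of_nonempty hne fun j hj => (Finset.mem_filter.1 (hTB hj)).2
      rw [Finset.sum_const, nsmul_eq_mul, hTcard] at h2
      have hcast : ((s - 1 : ℕ) : ℝ) = (s:ℝ) - 1 := by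
        rw [Nat.cast_sub (by omega), Nat.cast_one]
      rw [hcast, htmul] at h2
      linarith
    have hsplit := Finset.sum_filter_add_sum_filter_not (Finset.univ.erase i)
      (fun j => t < |G i j|) (fun j => (G i j)^2)
    have b1 : ∑ j ∈ B, (G i j)^2 ≤ ε^2 := by
      have hsum := hrow i B hBi hBcard
      have step : ∑ j ∈ B, (G i j)^2 ≤ ∑ j ∈ B, ε * |G i j| := by
        refine Finset.sum_le_sum fun j hj => ?_
        have hj' := (Finset.mem_filter.1 hj).1
        have hij : i ≠ j := fun e => (Finset.mem_erase.1 hj').1 e.symm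
        have hp := hpair i j hij
        nlinarith [abs_nonneg (G i j), sq_abs (G i j)]
      rw [← Finset.mul_sum] at step
      have step2 : ε * (∑ j ∈ B, |G i j|) ≤ ε * ε :=
        mul_le_mul_of_nonneg_left hsum hε.le
      nlinarith [step, step2]
    have b2 : ∑ j ∈ (Finset.univ.erase i).filter (fun j => ¬ t < |G i j|), (G i j)^2
        ≤ (d:ℝ) * t^2 := by
      have step : ∑ j ∈ (Finset.univ.erase i).filter (fun j => ¬ t < |G i j|), (G i j)^2
          ≤ ∑ _j ∈ (Finset.univ.erase i).filter (fun j => ¬ t < |G i j|), t^2 := by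
        refine Finset.sum_le_sum fun j hj => ?_
        have h := (Finset.mem_filter.1 hj).2
        push_neg at h
        nlinarith [abs_nonneg (G i j), sq_abs (G i j)]
      rw [Finset.sum_const, nsmul_eq_mul] at step
      have hcard : (((Finset.univ.erase i).filter (fun j => ¬ t < |G i j|)).card : ℝ)
          ≤ (d:ℝ) := by
        have := Finset.card_filter_le (Finset.univ.erase i) (fun j => ¬ t < |G i j|)
        have h2 := Finset.card_erase_le (a := i) (s := (Finset.univ : Finset (Fin d)))
        rw [Finset.card_univ, Fintype.card_fin] at h2
        exact_mod_cast le_trans this h2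
      nlinarith [sq_nonneg t]
    linarith
  -- diagonal entries
  have hGlb : ∀ i : Fin d, 1 - ε ≤ G i i := fun i => by
    have := abs_le.1 (hdiag i); linarith [this.1]
  have hGub : ∀ i : Fin d, G i i ≤ 1 + ε := fun i => by
    have := abs_le.1 (hdiag i); linarith [this.2]
  -- trace lower bound
  have htrace : (d:ℝ) * (1 - ε) ≤ ∑ i, G i i := by
    calc (d:ℝ) * (1 - ε) = ∑ _i : Fin d, (1 - ε) := by
          rw [Finset.sum_const, Finset.card_univ, Fintype.card_fin, nsmul_eq_mul]
      _ ≤ ∑ i, G i i := Finset.sum_le_sum fun i _ => hGlb i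
  set R : ℝ := (1+ε)^2 + ε^2 + (d:ℝ) * t^2 with hR
  -- total Frobenius bound
  have htot : ∑ i, ∑ j, (G i j)^2 ≤ (d:ℝ) * R := by
    have hrowtot : ∀ i : Fin d, ∑ j, (G i j)^2 ≤ R := by
      intro i
      rw [← Finset.add_sum_erase _ _ (Finset.mem_univ i)]
      have hdg : (G i i)^2 ≤ (1+ε)^2 := by
        nlinarith [hGlb i, hGub i]
      have := hsq i
      rw [hR]; linarith
    calc ∑ i, ∑ j, (G i j)^2 ≤ ∑ _i : Fin d, R := Finset.sum_le_sum fun i _ => hrowtot i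
      _ = (d:ℝ) * R := by
          rw [Finset.sum_const, Finset.card_univ, Fintype.card_fin, nsmul_eq_mul]
  have hwelch : (∑ i, G i i)^2 ≤ n * ∑ i, ∑ j, (G i j)^2 := welch_aux X
  have h1 : ((d:ℝ) * (1 - ε))^2 ≤ (n:ℝ) * ((d:ℝ) * R) := by
    calc ((d:ℝ) * (1 - ε))^2 ≤ (∑ i, G i i)^2 := by
          have h0 : 0 ≤ (d:ℝ) * (1 - ε) := by nlinarith
          exact pow_le_pow_left₀ h0 htrace 2
      _ ≤ n * ∑ i, ∑ j, (G i j)^2 := hwelch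
      _ ≤ (n:ℝ) * ((d:ℝ) * R) :=
          mul_le_mul_of_nonneg_left htot (Nat.cast_nonneg n)
  have hRpos : 0 < R := by
    rw [hR]; positivity
  have h2 : (d:ℝ) * (1 - ε)^2 ≤ (n:ℝ) * R := by
    have h1' : (d:ℝ) * ((d:ℝ) * (1 - ε)^2) ≤ (d:ℝ) * ((n:ℝ) * R) := by
      calc (d:ℝ) * ((d:ℝ) * (1 - ε)^2) = ((d:ℝ) * (1 - ε))^2 := by ring
        _ ≤ (n:ℝ) * ((d:ℝ) * R) := h1
        _ = (d:ℝ) * ((n:ℝ) * R) := by ring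
    exact le_of_mul_le_mul_left h1' hD
  have hDe : (s:ℝ)^3 ≤ (d:ℝ) * ε^2 := by
    rw [div_le_iff₀ (pow_pos hε 2)] at hd; linarith
  have hSt : (s:ℝ) * t ≤ 2 * ε := by
    linarith [mul_nonneg (show (0:ℝ) ≤ (s:ℝ) - 2 by linarith) ht0.le, htmul]
  have key : (s:ℝ)^2 * R ≤ 36 * ε^2 * (d:ℝ) := by
    have ht2 : (s:ℝ)^2 * t^2 ≤ 4 * ε^2 := by
      nlinarith [hSt, mul_nonneg hS0.le ht0.le]
    have hq : (s:ℝ)^2 * ((d:ℝ) * t^2) ≤ 4 * (d:ℝ) * ε^2 := by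
      linarith [mul_le_mul_of_nonneg_left ht2 hD.le]
    have hs2 : (s:ℝ)^2 ≤ (1/2) * ((d:ℝ) * ε^2) := by
      linarith [hDe, mul_nonneg (sq_nonneg ((s:ℝ))) (show (0:ℝ) ≤ (s:ℝ) - 2 by linarith)]
    have hRb : (1+ε)^2 + ε^2 ≤ 5/2 := by nlinarith
    have hRb2 : (s:ℝ)^2 * ((1+ε)^2 + ε^2) ≤ (s:ℝ)^2 * (5/2) :=
      mul_le_mul_of_nonneg_left hRb (sq_nonneg _)
    rw [hR]; linarith [hRb2, hq, hs2, mul_nonneg hD.le (sq_nonneg ε)]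
  have hq14 : (1/4 : ℝ) ≤ (1 - ε)^2 := by nlinarith
  have h3 : (d:ℝ) ≤ 4 * ((n:ℝ) * R) := by
    have := mul_le_mul_of_nonneg_left hq14 hD.le
    linarith
  have h4 : (s:ℝ)^2 * R ≤ (144 * ε^2 * (n:ℝ)) * R := by
    have h5 : 36 * ε^2 * (d:ℝ) ≤ 36 * ε^2 * (4 * ((n:ℝ) * R)) :=
      mul_le_mul_of_nonneg_left h3 (by positivity)
    calc (s:ℝ)^2 * R ≤ 36 * ε^2 * (d:ℝ) := key
      _ ≤ 36 * ε^2 * (4 * ((n:ℝ) * R)) := h5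
      _ = (144 * ε^2 * (n:ℝ)) * R := by ring
  have h6 : (s:ℝ)^2 ≤ 144 * ε^2 * (n:ℝ) := le_of_mul_le_mul_right h4 hRpos
  rw [div_le_iff₀ (by positivity : (0:ℝ) < 144 * ε^2)]
  linarith
end
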